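/- With the notation of the previous statement, assume in addition that gcd(a_i, a_j) = 1 for all i ≠ j. Then equality holds: N(F) = (1/r_i) Σ_{j=0}^{r_i-1} N(π_i^*(F ∘ σ_i^j)). -/

import Mathlib

noncomputable section

open MvPolynomial

/-- The weighted scalar equivalence on vectors: `x ∼ y` iff `y i = λ^{a i} * x i` for some
unit `λ`. -/
def wSetoid (K : Type) [Field K] (n : ℕ) (a : Fin (n + 1) → ℕ) :
    Setoid (Fin (n + 1) → K) where
  r x y := ∃ lam : Kˣ, ∀ i, (lam : K) ^ a i * x i = y i
  iseqv := by
    refine ⟨fun x => ⟨1, by simp⟩, ?_, ?_⟩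
    · rintro x y ⟨l, h⟩
      refine ⟨l⁻¹, fun i => ?_⟩
      rw [← h i, ← mul_assoc, ← mul_pow]
      simp
    · rintro x y z ⟨l, h⟩ ⟨m, h'⟩
      refine ⟨m * l, fun i => ?_⟩
      rw [← h' i, ← h i, ← mul_assoc, ← mul_pow, Units.val_mul]

/-- The weighted projective space `P(a_0, …, a_n)` over `K` (together with the class of the
zero vector). -/
def WP (K : Type) [Field K] (n : ℕ) (a : Fin (n + 1) → ℕ) := Quotient (wSetoid K n a)

/-- The weighted projective point attached to a vector. -/
def wcls {K : Type} [Field K] {n : ℕ} (a : Fin (n + 1) → ℕ) (x : Fin (n + 1) → K) :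
    WP K n a := Quotient.mk (wSetoid K n a) x

/-- Lift a vector with coordinates in `F` to the algebraic closure. -/
def liftv (F : Type) [Field F] (n : ℕ) (y : Fin (n + 1) → F) :
    Fin (n + 1) → AlgebraicClosure F := fun k => algebraMap F (AlgebraicClosure F) (y k)

/-- The `𝔽_q`-rational points of `P(a_0, …, a_n)`: nonzero classes fixed by the
`q`-power Frobenius. -/
def RatPts (F : Type) [Field F] [Fintype F] (n : ℕ) (a : Fin (n + 1) → ℕ) :
    Set (WP (AlgebraicClosure F) n a) :=
  {P | (∃ x : Fin (n + 1) → AlgebraicClosure F, x ≠ 0 ∧ wcls a x = P) ∧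
    ∀ x : Fin (n + 1) → AlgebraicClosure F, wcls a x = P →
      wcls a (fun k => x k ^ Fintype.card F) = P}

/-- The set of points admitting an `𝔽_q`-rational representative whose `i`-th coordinate is
the prescribed value `c`. -/
def Zset (F : Type) [Field F] [Fintype F] (n : ℕ) (a : Fin (n + 1) → ℕ) (i : Fin (n + 1))
    (c : F) : Set (WP (AlgebraicClosure F) n a) :=
  {P | ∃ y : Fin (n + 1) → F, y ≠ 0 ∧ y i = c ∧ wcls a (liftv F n y) = P}

/-- The `i`-th coordinate point `O_i = [0 : ⋯ : 0 : 1 : 0 : ⋯ : 0]`. -/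
def Oi (F : Type) [Field F] [Fintype F] (n : ℕ) (a : Fin (n + 1) → ℕ) (i : Fin (n + 1)) :
    WP (AlgebraicClosure F) n a := wcls a (liftv F n (Pi.single i 1))

/-- The set `R_i`: rational points with `i`-th coordinate `0`, together with `O_i`. -/
def Rset (F : Type) [Field F] [Fintype F] (n : ℕ) (a : Fin (n + 1) → ℕ) (i : Fin (n + 1)) :
    Set (WP (AlgebraicClosure F) n a) := Zset F n a i 0 ∪ {Oi F n a i}

/-- The set `T_i`: rational points with a representative having `i`-th coordinate `1`,
excluding `O_i`. -/
def Tset (F : Type) [Field F] [Fintype F] (n : ℕ) (a : Fin (n + 1) → ℕ) (i : Fin (n + 1)) :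
    Set (WP (AlgebraicClosure F) n a) := Zset F n a i 1 \ {Oi F n a i}

/-- The set `I_i`: rational points whose `i`-th coordinate (in an `𝔽_q`-rational
representative) is a nonzero non-`a_i`-th power. -/
def Iset (F : Type) [Field F] [Fintype F] (n : ℕ) (a : Fin (n + 1) → ℕ) (i : Fin (n + 1)) :
    Set (WP (AlgebraicClosure F) n a) :=
  {P | ∃ y : Fin (n + 1) → F, y ≠ 0 ∧ wcls a (liftv F n y) = P ∧ y i ≠ 0 ∧
    ¬ ∃ z : F, z ^ a i = y i}

/-- `F` is weighted homogeneous of degree `d` for the weights `a`: over the algebraic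
closure, `F(λ^{a_0}x_0, …, λ^{a_n}x_n) = λ^d F(x_0, …, x_n)`. -/
def WHomog (F : Type) [Field F] [Fintype F] (n : ℕ) (a : Fin (n + 1) → ℕ)
    (Fp : MvPolynomial (Fin (n + 1)) F) (d : ℕ) : Prop :=
  ∀ (lam : AlgebraicClosure F) (x : Fin (n + 1) → AlgebraicClosure F),
    MvPolynomial.eval (fun k => lam ^ a k * x k)
        (MvPolynomial.map (algebraMap F (AlgebraicClosure F)) Fp)
      = lam ^ d * MvPolynomial.eval x (MvPolynomial.map (algebraMap F (AlgebraicClosure F)) Fp)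

/-- The `𝔽_q`-rational points of the hypersurface `V(F)` in `P(a_0, …, a_n)`. -/
def VRat (F : Type) [Field F] [Fintype F] (n : ℕ) (a : Fin (n + 1) → ℕ)
    (Fp : MvPolynomial (Fin (n + 1)) F) : Set (WP (AlgebraicClosure F) n a) :=
  {P | ∃ y : Fin (n + 1) → F, y ≠ 0 ∧ MvPolynomial.eval y Fp = 0 ∧
    wcls a (liftv F n y) = P}

/-- The `i`-th power map on coordinates. -/
def pimapFun (K : Type) [Field K] (n : ℕ) (a : Fin (n + 1) → ℕ) (i : Fin (n + 1))
    (x : Fin (n + 1) → K) : Fin (n + 1) → K := Function.update x i (x i ^ a i)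

/-- The morphism `π_i : P(a_0, …, a_{i-1}, 1, a_{i+1}, …, a_n) → P(a_0, …, a_n)` raising
the `i`-th coordinate to the power `a_i`. -/
def pimap (K : Type) [Field K] (n : ℕ) (a : Fin (n + 1) → ℕ) (i : Fin (n + 1)) :
    WP K n (Function.update a i 1) → WP K n a :=
  Quotient.lift (fun x => wcls a (pimapFun K n a i x)) (by
    rintro x y ⟨l, h⟩
    refine Quotient.sound ⟨l, fun k => ?_⟩
    rcases eq_or_ne k i with rfl | hk
    · have hi := h k
      rw [Function.update_self] at hi
      simp only [pimapFun, Function.update_self, ← hi, pow_one, mul_pow]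
    · have hi := h k
      rw [Function.update_of_ne hk] at hi
      simp only [pimapFun, Function.update_of_ne hk, hi])

/-- The pullback `π_i^* F`, substituting `X_i^{a_i}` for `X_i`. -/
def pistar (F : Type) [Field F] (n : ℕ) (a : Fin (n + 1) → ℕ) (i : Fin (n + 1))
    (Fp : MvPolynomial (Fin (n + 1)) F) : MvPolynomial (Fin (n + 1)) F :=
  MvPolynomial.bind₁ (fun k => if k = i then X k ^ a i else X k) Fp

/-- The polynomial `F ∘ σ_i^j`, substituting `δ^j X_i` for `X_i`. -/
def sigmaPoly (F : Type) [Field F] (n : ℕ) (i : Fin (n + 1)) (δ : F) (j : ℕ)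
    (Fp : MvPolynomial (Fin (n + 1)) F) : MvPolynomial (Fin (n + 1)) F :=
  MvPolynomial.bind₁ (fun k => if k = i then MvPolynomial.C (δ ^ j) * X k else X k) Fp

/-!
Both sides count nonzero affine solutions. When the weights are pairwise coprime, every
nonzero `𝔽_q`-point of `P(a)` has exactly `q - 1` rational representatives: if two coordinates
are nonzero, their coprime weights force the scaling factor into `𝔽_q^*` (Bezout), and a
coordinate point `[0 : ⋯ : c : ⋯ : 0]` absorbs every nonzero `c`. So `(q - 1) N(F)` is the
number of nonzero zeros of `F` in `𝔽_q^{n+1}`, and the same holds for each `π_i^*(F ∘ σ_i^j)`,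
whose weights are still pairwise coprime.

On the affine side, `y ↦ (…, δ^j y_i^{a_i}, …)` maps the nonzero zeros of `π_i^*(F ∘ σ_i^j)`
to those of `F`, with fibre over `x` the solutions of `δ^j t^{a_i} = x_i`. For `x_i ≠ 0` these are
counted in the cyclic group `𝔽_q^*`: the `a_i`-th powers form its subgroup of index `r_i`,
whose cosets are represented by the `δ^j`, `j < r_i`, and each fibre of `t ↦ t^{a_i}` over that
subgroup has `r_i` elements. Hence, for every `x`, the fibres over `x` have `r_i` points in
total.
-/

open Finset

theorem Subgroup.mem_of_pow_mem_of_coprime {G : Type*} [Group G] {H : Subgroup G} {u : G}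
    {p q : ℕ} (hpq : p.Coprime q) (hp : u ^ p ∈ H) (hq : u ^ q ∈ H) : u ∈ H := by
  have hu : u = (u ^ p) ^ p.gcdA q * (u ^ q) ^ p.gcdB q := by
    rw [← zpow_natCast, ← zpow_natCast, ← zpow_mul, ← zpow_mul, ← zpow_add,
      ← Nat.gcd_eq_gcd_ab, hpq.gcd_eq_one, Nat.cast_one, zpow_one]
  rw [hu]
  exact H.mul_mem (H.zpow_mem hp _) (H.zpow_mem hq _)

theorem MonoidHom.card_filter_eq_card_ker {G G' : Type*} [Group G] [Group G'] [Fintype G]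
    [DecidableEq G'] (f : G →* G') {b : G'} (hb : b ∈ f.range) :
    #{t | f t = b} = Nat.card f.ker := by
  obtain ⟨t₀, rfl⟩ := hb
  rw [← Nat.card_eq_finsetCard]
  refine Nat.card_congr
    { toFun := fun t => ⟨t₀⁻¹ * t, by simp [MonoidHom.mem_ker, (mem_filter.mp t.2).2]⟩
      invFun := fun k => ⟨t₀ * k, by simp [(MonoidHom.mem_ker).mp k.2]⟩
      left_inv := fun t => by simp
      right_inv := fun k => by simp }

theorem IsOfFinOrder.card_filter_range_pow_eq {M : Type*} [Monoid M] [DecidableEq M] {g y : M}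
    (hg : IsOfFinOrder g) (hy : y ∈ Submonoid.powers g) :
    #{j ∈ range (orderOf g) | g ^ j = y} = 1 := by
  obtain ⟨k, rfl⟩ := hy
  rw [card_eq_one]
  refine ⟨k % orderOf g, eq_singleton_iff_unique_mem.mpr ⟨?_, fun j hj => ?_⟩⟩
  · exact mem_filter.mpr ⟨mem_range.mpr (Nat.mod_lt k hg.orderOf_pos), pow_mod_orderOf g k⟩
  · rw [mem_filter, mem_range] at hj
    refine pow_injOn_Iio_orderOf hj.1 (Nat.mod_lt k hg.orderOf_pos) ?_
    simp only [hj.2, pow_mod_orderOf]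

theorem sum_card_mul_pow_eq_gcd_of_forall_mem_zpowers {G : Type*} [CommGroup G] [Fintype G]
    [DecidableEq G] {δ : G} (hδ : ∀ z : G, z ∈ Subgroup.zpowers δ) (m : ℕ) (c : G) :
    ∑ j ∈ range ((Nat.card G).gcd m), #{t | δ ^ j * t ^ m = c} = (Nat.card G).gcd m := by
  set r := (Nat.card G).gcd m
  have : IsCyclic G := ⟨⟨δ, fun z => Subgroup.mem_zpowers_iff.mp (hδ z)⟩⟩
  let H := (powMonoidHom m : G →* G).range
  have hQ : Nat.card (G ⧸ H) = r := by
    rw [← Subgroup.index_eq_card, IsCyclic.index_powMonoidHom_range]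
  have hgen : ∀ z : G ⧸ H, z ∈ Submonoid.powers (δ : G ⧸ H) := by
    intro z
    obtain ⟨g, rfl⟩ := QuotientGroup.mk_surjective z
    obtain ⟨k, rfl⟩ := mem_powers_iff_mem_zpowers.mpr (hδ g)
    exact ⟨k, by simp⟩
  have horder : orderOf (δ : G ⧸ H) = r := by
    rw [← hQ]
    exact orderOf_eq_card_of_forall_mem_zpowers fun z => mem_powers_iff_mem_zpowers.mp (hgen z)
  have hfiber : ∀ j, #{t | δ ^ j * t ^ m = c} = if (δ : G ⧸ H) ^ j = c then r else 0 := by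
    intro j
    have hfilt : #{t | δ ^ j * t ^ m = c} = #{t | powMonoidHom m t = (δ ^ j)⁻¹ * c} := by
      congr 1
      ext t
      simp [eq_inv_mul_iff_mul_eq]
    rw [hfilt]
    split_ifs with h
    · rw [MonoidHom.card_filter_eq_card_ker, IsCyclic.card_powMonoidHom_ker]
      rw [← QuotientGroup.mk_pow, QuotientGroup.eq] at h
      exact h
    · rw [card_eq_zero, filter_eq_empty_iff]
      rintro t - ht
      apply h
      rw [← QuotientGroup.mk_pow, QuotientGroup.eq]
      exact ⟨t, ht⟩
  have hunique : #{j ∈ range r | (δ : G ⧸ H) ^ j = c} = 1 := by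
    rw [← horder]
    exact (isOfFinOrder_of_finite _).card_filter_range_pow_eq (hgen c)
  rw [sum_congr rfl fun j _ => hfiber j, sum_ite, sum_const_zero, add_zero, sum_const,
    smul_eq_mul, hunique, one_mul]

theorem card_filter_eq_card_filter_units {K : Type*} [GroupWithZero K] [Fintype K]
    [Fintype Kˣ] (p : K → Prop) [DecidablePred p] (h0 : ¬ p 0) :
    #{t | p t} = #{u : Kˣ | p u} := by
  refine (card_nbij (fun u : Kˣ => (u : K)) (fun u hu => by simpa using hu)
    (fun u _ v _ h => Units.ext h) fun t ht => ?_).symm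
  have ht : p t := by simpa using ht
  exact ⟨Units.mk0 t (by rintro rfl; exact h0 ht), by simpa using ht, rfl⟩

theorem FiniteField.sum_card_mul_pow_eq_gcd {F : Type*} [Field F] [Fintype F] [DecidableEq F]
    {δ : Fˣ} (hδ : ∀ z : Fˣ, z ∈ Subgroup.zpowers δ) {m : ℕ} (hm : 0 < m) (c : F) :
    ∑ j ∈ range (m.gcd (Fintype.card F - 1)), #{t : F | (δ : F) ^ j * t ^ m = c}
      = m.gcd (Fintype.card F - 1) := by
  rcases eq_or_ne c 0 with rfl | hc
  · have hzero : ∀ j, #{t : F | (δ : F) ^ j * t ^ m = 0} = 1 := fun j => by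
      rw [card_eq_one]
      exact ⟨0, by ext t; simp [pow_eq_zero_iff hm.ne']⟩
    rw [sum_congr rfl fun j _ => hzero j]
    simp
  · have hunits : ∀ j, #{t : F | (δ : F) ^ j * t ^ m = c}
        = #{u : Fˣ | δ ^ j * u ^ m = Units.mk0 c hc} := fun j => by
      rw [card_filter_eq_card_filter_units _ (by simp [zero_pow hm.ne', hc.symm])]
      simp [← Units.val_inj]
    rw [sum_congr rfl fun j _ => hunits j, Nat.gcd_comm, ← Fintype.card_units,
      ← Nat.card_eq_fintype_card]
    exact sum_card_mul_pow_eq_gcd_of_forall_mem_zpowers hδ m _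

theorem card_filter_update_eq {ι F : Type*} [Fintype ι] [DecidableEq ι] [Fintype F]
    [DecidableEq F] (g : F → F) (i : ι) (x : ι → F) :
    #{y : ι → F | Function.update y i (g (y i)) = x} = #{t | g t = x i} := by
  refine card_nbij' (· i) (Function.update x i) (fun y hy => ?_) (fun t ht => ?_)
    (fun y hy => ?_) (fun t _ => by simp)
  · simpa using congrFun (mem_filter.mp hy).2 i
  · simpa [Function.update_idem] using (mem_filter.mp ht).2
  · rw [← (mem_filter.mp hy).2]
    simp

theorem FiniteField.sum_card_preimage_update_mul_pow {ι F : Type*} [Fintype ι] [DecidableEq ι]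
    [Field F] [Fintype F] [DecidableEq F] {δ : Fˣ} (hδ : ∀ z : Fˣ, z ∈ Subgroup.zpowers δ)
    {m : ℕ} (hm : 0 < m) (i : ι) (S : Finset (ι → F)) :
    ∑ j ∈ range (m.gcd (Fintype.card F - 1)),
        #{y | Function.update y i ((δ : F) ^ j * y i ^ m) ∈ S}
      = m.gcd (Fintype.card F - 1) * #S := by
  have hfiber : ∀ j, #{y | Function.update y i ((δ : F) ^ j * y i ^ m) ∈ S}
      = ∑ x ∈ S, #{t : F | (δ : F) ^ j * t ^ m = x i} := fun j => by
    rw [card_eq_sum_card_fiberwise (f := fun y => Function.update y i ((δ : F) ^ j * y i ^ m))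
      (t := S) fun y hy => by simpa using hy]
    refine sum_congr rfl fun x hx => ?_
    rw [filter_filter, ← card_filter_update_eq (fun t => (δ : F) ^ j * t ^ m) i x]
    congr 1
    ext y
    simp only [mem_filter, mem_univ, true_and, and_iff_right_iff_imp]
    rintro rfl
    exact hx
  rw [sum_congr rfl fun j _ => hfiber j, sum_comm,
    sum_congr rfl fun x _ => FiniteField.sum_card_mul_pow_eq_gcd hδ hm (x i), sum_const,
    smul_eq_mul, mul_comm]

theorem Function.update_mul_pow_eq_zero_iff {ι M : Type*} [DecidableEq ι] [MonoidWithZero M]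
    [NoZeroDivisors M] {y : ι → M} {i : ι} {c : M} (hc : c ≠ 0) {m : ℕ} (hm : m ≠ 0) :
    Function.update y i (c * y i ^ m) = 0 ↔ y = 0 := by
  rw [Function.update_eq_iff]
  simp only [Pi.zero_apply, mul_eq_zero, hc, false_or, pow_eq_zero_iff hm]
  refine ⟨fun ⟨hi, hne⟩ => funext fun k => ?_, by rintro rfl; simp⟩
  rcases eq_or_ne k i with rfl | hk
  exacts [hi, hne k hk]

theorem MvPolynomial.eval_map_bind₁ {R S σ τ : Type*} [CommSemiring R] [CommSemiring S]
    (φ : R →+* S) (y : τ → S) (h : σ → MvPolynomial τ R) (p : MvPolynomial σ R) :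
    eval y (map φ (bind₁ h p)) = eval (fun k => eval y (map φ (h k))) (map φ p) := by
  simp only [eval_map, ← coe_eval₂Hom, eval₂Hom_bind₁]

section WeightedProjective

variable {K : Type} [Field K] {n : ℕ} {a : Fin (n + 1) → ℕ}

theorem wcls_eq_iff {x y : Fin (n + 1) → K} :
    wcls a x = wcls a y ↔ ∃ lam : Kˣ, ∀ k, (lam : K) ^ a k * x k = y k :=
  Quotient.eq

theorem eq_zero_iff_of_wcls_eq {x y : Fin (n + 1) → K} (h : wcls a x = wcls a y)
    (k : Fin (n + 1)) : x k = 0 ↔ y k = 0 := by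
  obtain ⟨lam, hlam⟩ := wcls_eq_iff.mp h
  simp [← hlam k]

end WeightedProjective

section RationalPoints

variable {F : Type} [Field F] {n : ℕ} {a : Fin (n + 1) → ℕ}

theorem liftv_apply_eq_zero_iff {y : Fin (n + 1) → F} {k : Fin (n + 1)} :
    liftv F n y k = 0 ↔ y k = 0 := by
  simp [liftv]

theorem eq_zero_iff_of_wcls_liftv_eq {x y : Fin (n + 1) → F}
    (h : wcls a (liftv F n y) = wcls a (liftv F n x)) (k : Fin (n + 1)) :
    y k = 0 ↔ x k = 0 := by
  rw [← liftv_apply_eq_zero_iff, ← liftv_apply_eq_zero_iff (y := x)]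
  exact eq_zero_iff_of_wcls_eq h k

theorem ne_zero_of_wcls_liftv_eq {x y : Fin (n + 1) → F}
    (h : wcls a (liftv F n y) = wcls a (liftv F n x)) (hx : x ≠ 0) : y ≠ 0 := by
  rintro rfl
  exact hx (funext fun k => (eq_zero_iff_of_wcls_liftv_eq h k).mp rfl)

theorem wcls_liftv_smul (μ : Fˣ) (x : Fin (n + 1) → F) :
    wcls a (liftv F n fun k => (μ : F) ^ a k * x k) = wcls a (liftv F n x) :=
  (wcls_eq_iff.mpr ⟨Units.map (algebraMap F (AlgebraicClosure F) : F →* AlgebraicClosure F) μ,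
    fun k => by simp [liftv]⟩).symm

theorem eval_liftv (y : Fin (n + 1) → F) (p : MvPolynomial (Fin (n + 1)) F) :
    eval (liftv F n y) (map (algebraMap F (AlgebraicClosure F)) p)
      = algebraMap F (AlgebraicClosure F) (eval y p) := by
  rw [eval_map, eval₂_comp]
  rfl

open Classical in
theorem card_filter_wcls_liftv_eq_of_coprime [Fintype F]
    {x : Fin (n + 1) → F} {k l : Fin (n + 1)} (hcop : (a k).Coprime (a l))
    (hk : x k ≠ 0) (hl : x l ≠ 0) :
    #{y | wcls a (liftv F n y) = wcls a (liftv F n x)} = Fintype.card F - 1 := by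
  set φ : Fˣ →* (AlgebraicClosure F)ˣ :=
    Units.map (algebraMap F (AlgebraicClosure F) : F →* AlgebraicClosure F)
  have hfiber : ({y | wcls a (liftv F n y) = wcls a (liftv F n x)} : Finset _)
      = univ.image fun μ : Fˣ => fun k => (μ : F) ^ a k * x k := by
    ext y
    simp only [mem_filter, mem_univ, true_and, mem_image]
    refine ⟨fun h => ?_, fun ⟨μ, hμ⟩ => hμ ▸ wcls_liftv_smul μ x⟩
    obtain ⟨lam, hlam⟩ := wcls_eq_iff.mp h
    have hpow_mem : ∀ k', x k' ≠ 0 → lam ^ a k' ∈ φ.range := fun k' hk' => by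
      have hy : y k' ≠ 0 := (eq_zero_iff_of_wcls_liftv_eq h k').not.mpr hk'
      refine ⟨Units.mk0 (x k' / y k') (div_ne_zero hk' hy), Units.ext ?_⟩
      simp only [φ, Units.coe_map, Units.val_mk0, Units.val_pow_eq_pow_val,
        MonoidHom.coe_coe, map_div₀]
      rw [div_eq_iff (by simpa using hy)]
      exact (hlam k').symm
    obtain ⟨c, hc⟩ := MonoidHom.mem_range.mp
      (Subgroup.mem_of_pow_mem_of_coprime hcop (hpow_mem k hk) (hpow_mem l hl))
    refine ⟨c⁻¹, funext fun k' => (algebraMap F (AlgebraicClosure F)).injective ?_⟩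
    have := hlam k'
    simp only [liftv, ← hc, φ] at this
    simp [← this]
  have hinj : Function.Injective fun μ : Fˣ => fun k => (μ : F) ^ a k * x k := by
    intro μ ν h
    have hpow : ∀ k', x k' ≠ 0 → (μ / ν) ^ a k' ∈ (⊥ : Subgroup Fˣ) := fun k' hk' => by
      rw [Subgroup.mem_bot, div_pow, div_eq_one]
      exact Units.ext (mul_right_cancel₀ hk' (congrFun h k'))
    exact div_eq_one.mp (Subgroup.mem_bot.mp
      (Subgroup.mem_of_pow_mem_of_coprime hcop (hpow k hk) (hpow l hl)))
  rw [hfiber, card_image_of_injective _ hinj, card_univ, Fintype.card_units]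

open Classical in
theorem card_filter_wcls_liftv_eq_single [Fintype F] {k : Fin (n + 1)} (hk : 0 < a k)
    {c : F} (hc : c ≠ 0) :
    #{y | wcls a (liftv F n y) = wcls a (liftv F n (Pi.single k c))} = Fintype.card F - 1 := by
  have hfiber : ({y | wcls a (liftv F n y) = wcls a (liftv F n (Pi.single k c))} : Finset _)
      = univ.image fun μ : Fˣ => Pi.single k (μ : F) := by
    ext y
    simp only [mem_filter, mem_univ, true_and, mem_image]
    constructor
    · intro h
      have hy : ∀ l, l ≠ k → y l = 0 := fun l hl => by
        simpa [hl] using eq_zero_iff_of_wcls_liftv_eq h l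
      have hyk : y k ≠ 0 := by simpa [hc] using eq_zero_iff_of_wcls_liftv_eq h k
      refine ⟨Units.mk0 (y k) hyk, funext fun l => ?_⟩
      rcases eq_or_ne l k with rfl | hl <;> simp [*]
    · rintro ⟨μ, rfl⟩
      obtain ⟨lam, hlam⟩ := IsAlgClosed.exists_pow_nat_eq
        (algebraMap F (AlgebraicClosure F) (c / μ)) hk
      have hlam0 : lam ≠ 0 := by
        rintro rfl
        rw [zero_pow hk.ne', eq_comm, map_eq_zero] at hlam
        exact div_ne_zero hc μ.ne_zero hlam
      refine wcls_eq_iff.mpr ⟨Units.mk0 lam hlam0, fun l => ?_⟩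
      rcases eq_or_ne l k with rfl | hl
      · simp [liftv, hlam]
      · simp [liftv, hl]
  rw [hfiber, card_image_of_injective _ fun μ ν h => Units.ext (Pi.single_injective k h),
    card_univ, Fintype.card_units]

open Classical in
theorem card_filter_wcls_liftv_eq [Fintype F] (ha : ∀ k, 0 < a k)
    (hcop : Pairwise fun k l => (a k).Coprime (a l)) {x : Fin (n + 1) → F} (hx : x ≠ 0) :
    #{y | wcls a (liftv F n y) = wcls a (liftv F n x)} = Fintype.card F - 1 := by
  obtain ⟨k, hk⟩ := Function.ne_iff.mp hx
  by_cases hsupp : ∃ l, l ≠ k ∧ x l ≠ 0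
  · obtain ⟨l, hlk, hl⟩ := hsupp
    exact card_filter_wcls_liftv_eq_of_coprime (hcop hlk.symm) hk hl
  · push Not at hsupp
    have hsingle : x = Pi.single k (x k) :=
      funext fun l => by rcases eq_or_ne l k with rfl | hl <;> simp [*]
    rw [hsingle]
    exact card_filter_wcls_liftv_eq_single (ha k) hk

theorem WHomog.eval_eq_zero_of_wcls_liftv_eq [Fintype F] {d : ℕ}
    {Fp : MvPolynomial (Fin (n + 1)) F} (hF : WHomog F n a Fp d) {x y : Fin (n + 1) → F}
    (h : wcls a (liftv F n y) = wcls a (liftv F n x)) (hx : eval x Fp = 0) : eval y Fp = 0 := by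
  obtain ⟨lam, hlam⟩ := wcls_eq_iff.mp h.symm
  have hy : liftv F n y = fun k => (lam : AlgebraicClosure F) ^ a k * liftv F n x k :=
    funext fun k => (hlam k).symm
  rw [← map_eq_zero (algebraMap F (AlgebraicClosure F)), ← eval_liftv, hy, hF, eval_liftv, hx,
    map_zero, mul_zero]

theorem card_sub_one_mul_card_VRat [Fintype F] [DecidableEq F] {d : ℕ} (ha : ∀ k, 0 < a k)
    (hcop : Pairwise fun k l => (a k).Coprime (a l)) {Fp : MvPolynomial (Fin (n + 1)) F}
    (hF : WHomog F n a Fp d) :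
    (Fintype.card F - 1) * Nat.card (VRat F n a Fp) = #{y | y ≠ 0 ∧ eval y Fp = 0} := by
  classical
  set S : Finset (Fin (n + 1) → F) := {y | y ≠ 0 ∧ eval y Fp = 0}
  have hV : VRat F n a Fp = S.image fun y => wcls a (liftv F n y) := by
    ext P
    simp [VRat, S, and_assoc]
  rw [hV, Nat.card_coe_set_eq, Set.ncard_coe_finset,
    card_eq_sum_card_image (fun y => wcls a (liftv F n y)) S, sum_congr rfl fun P hP => ?_,
    sum_const, smul_eq_mul, mul_comm]
  obtain ⟨x, hx, rfl⟩ := mem_image.mp hP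
  obtain ⟨hx0, hxF⟩ := (mem_filter.mp hx).2
  rw [← card_filter_wcls_liftv_eq ha hcop hx0]
  congr 1
  ext y
  simp only [S, mem_filter, mem_univ, true_and, and_iff_right_iff_imp]
  exact fun h => ⟨ne_zero_of_wcls_liftv_eq h hx0, hF.eval_eq_zero_of_wcls_liftv_eq h hxF⟩

end RationalPoints

section Pullback

variable {F : Type} [Field F] {n : ℕ} {a : Fin (n + 1) → ℕ}

theorem eval_map_pistar_sigmaPoly {K : Type*} [CommRing K] (φ : F →+* K) (i : Fin (n + 1))
    (δ : F) (j : ℕ) (Fp : MvPolynomial (Fin (n + 1)) F) (y : Fin (n + 1) → K) :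
    eval y (map φ (pistar F n a i (sigmaPoly F n i δ j Fp)))
      = eval (Function.update y i (φ δ ^ j * y i ^ a i)) (map φ Fp) := by
  rw [pistar, sigmaPoly, eval_map_bind₁, eval_map_bind₁]
  refine congrArg (fun g => eval g _) (funext fun k => ?_)
  rcases eq_or_ne k i with rfl | hk <;> simp [*]

theorem eval_pistar_sigmaPoly (i : Fin (n + 1)) (δ : F) (j : ℕ)
    (Fp : MvPolynomial (Fin (n + 1)) F) (y : Fin (n + 1) → F) :
    eval y (pistar F n a i (sigmaPoly F n i δ j Fp))
      = eval (Function.update y i (δ ^ j * y i ^ a i)) Fp := by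
  simpa using eval_map_pistar_sigmaPoly (RingHom.id F) i δ j Fp y

theorem WHomog.pistar_sigmaPoly [Fintype F] {d : ℕ} {Fp : MvPolynomial (Fin (n + 1)) F}
    (hF : WHomog F n a Fp d) (i : Fin (n + 1)) (δ : F) (j : ℕ) :
    WHomog F n (Function.update a i 1) (pistar F n a i (sigmaPoly F n i δ j Fp)) d := by
  intro lam x
  rw [eval_map_pistar_sigmaPoly, eval_map_pistar_sigmaPoly, ← hF]
  refine congrArg (fun g => eval g _) (funext fun k => ?_)
  rcases eq_or_ne k i with rfl | hk
  · simp only [Function.update_self, pow_one]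
    ring
  · simp [hk]

theorem sum_card_zeros_pistar_sigmaPoly [Fintype F] [DecidableEq F] {i : Fin (n + 1)}
    (hai : 0 < a i) {δ : Fˣ} (hδ : ∀ z : Fˣ, z ∈ Subgroup.zpowers δ)
    (Fp : MvPolynomial (Fin (n + 1)) F) :
    ∑ j ∈ range ((a i).gcd (Fintype.card F - 1)),
        #{y | y ≠ 0 ∧ eval y (pistar F n a i (sigmaPoly F n i (δ : F) j Fp)) = 0}
      = (a i).gcd (Fintype.card F - 1) * #{y | y ≠ 0 ∧ eval y Fp = 0} := by
  rw [← FiniteField.sum_card_preimage_update_mul_pow hδ hai i]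
  refine sum_congr rfl fun j _ => congrArg card (filter_congr fun y _ => ?_)
  simp [eval_pistar_sigmaPoly,
    Function.update_mul_pow_eq_zero_iff (pow_ne_zero j δ.ne_zero) hai.ne']

end Pullback

theorem Pairwise.coprime_update_one {n : ℕ} {a : Fin (n + 1) → ℕ}
    (hcop : Pairwise fun k l => (a k).Coprime (a l)) (i : Fin (n + 1)) :
    Pairwise fun k l => (Function.update a i 1 k).Coprime (Function.update a i 1 l) := by
  intro k l hkl
  rcases eq_or_ne k i with rfl | hk
  · simp
  rcases eq_or_ne l i with rfl | hl
  · simp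
  simpa [hk, hl] using hcop hkl

/-- Under pairwise coprime weights, equality holds:
`r_i · N(F) = ∑_{j=0}^{r_i - 1} N(π_i^*(F ∘ σ_i^j))`. -/
theorem stmt14 (F : Type) [Field F] [Fintype F] (q n d : ℕ) (hq : Fintype.card F = q)
    (a : Fin (n + 1) → ℕ) (ha : ∀ i, 0 < a i)
    (hcop : ∀ k l : Fin (n + 1), k ≠ l → Nat.gcd (a k) (a l) = 1) (i : Fin (n + 1))
    (δ : Fˣ) (hδ : ∀ z : Fˣ, z ∈ Subgroup.zpowers δ)
    (r : ℕ) (hr : r = Nat.gcd (a i) (q - 1))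
    (Fp : MvPolynomial (Fin (n + 1)) F) (hF : WHomog F n a Fp d) :
    r * Nat.card (VRat F n a Fp) =
      ∑ j ∈ Finset.range r,
        Nat.card (VRat F n (Function.update a i 1)
          (pistar F n a i (sigmaPoly F n i (δ : F) j Fp))) := by
  classical
  subst hq hr
  have hcop : Pairwise fun k l => (a k).Coprime (a l) := fun k l => hcop k l
  have ha' : ∀ k, 0 < Function.update a i 1 k := fun k => by
    rcases eq_or_ne k i with rfl | hk <;> simp [*]
  have hq1 : 0 < Fintype.card F - 1 := Nat.sub_pos_of_lt Fintype.one_lt_card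
  apply Nat.eq_of_mul_eq_mul_left hq1
  rw [mul_left_comm, card_sub_one_mul_card_VRat ha hcop hF, ← sum_card_zeros_pistar_sigmaPoly
    (ha i) hδ, mul_sum]
  exact sum_congr rfl fun j _ => (card_sub_one_mul_card_VRat ha' (hcop.coprime_update_one i)
    (hF.pistar_sigmaPoly i δ j)).symm
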